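/- Let a, b, c, d ∈ ℝ satisfy a² + c² = 2 and b² + d² = 2, and let φ₁, φ₂ ∈ ℝ. Define the 4×4 complex matrix U = (1/√2)·[[a e^{−iφ₁}, 0, 0, −c], [0, d, −b e^{−iφ₂}, 0], [0, b e^{iφ₂}, d, 0], [c, 0, 0, a e^{iφ₁}]], and the Kraus operators K₁ = (1/√2)·[[a e^{−iφ₁}, 0], [0, d]] and K₂ = (1/√2)·[[0, b e^{iφ₂}], [c, 0]]. Then (i) U is unitary, and (ii) for every ρ ∈ M₂(ℂ), if U · [[ρ, 0],[0, 0]] · U† is written in 2×2 block form as [[M₁₁, M₁₂],[M₂₁, M₂₂]] (where [[ρ,0],[0,0]] is the 4×4 block matrix with ρ in the top-left 2×2 block and zeros elsewhere), then M₁₁ + M₂₂ = K₁ ρ K₁† + K₂ ρ K₂†. That is, U is a Stinespring dilation unitary implementing the quasi-extreme channel ρ ↦ K₁ρK₁† + K₂ρK₂†, with the sum of diagonal blocks realizing the partial trace over the environment. -/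
import Mathlib


open Matrix

/-- The Stinespring dilation unitary
`U = (1/√2)[[a e^{−iφ₁},0,0,−c],[0,d,−b e^{−iφ₂},0],[0,b e^{iφ₂},d,0],[c,0,0,a e^{iφ₁}]]`,
written as a 4×4 matrix in 2×2 block form (environment ⊕ system indexing). -/
noncomputable def stinespringU (a b c d φ₁ φ₂ : ℝ) :
    Matrix (Fin 2 ⊕ Fin 2) (Fin 2 ⊕ Fin 2) ℂ :=
  ((Real.sqrt 2 : ℂ))⁻¹ • Matrix.fromBlocks
    !![(a : ℂ) * Complex.exp (-(Complex.I * φ₁)), 0; 0, (d : ℂ)]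
    !![0, -(c : ℂ); -((b : ℂ) * Complex.exp (-(Complex.I * φ₂))), 0]
    !![0, (b : ℂ) * Complex.exp (Complex.I * φ₂); (c : ℂ), 0]
    !![(d : ℂ), 0; 0, (a : ℂ) * Complex.exp (Complex.I * φ₁)]

/-- The Kraus operator `K₁ = (1/√2)[[a e^{−iφ₁},0],[0,d]]`. -/
noncomputable def kraus1 (a d φ₁ : ℝ) : Matrix (Fin 2) (Fin 2) ℂ :=
  ((Real.sqrt 2 : ℂ))⁻¹ • !![(a : ℂ) * Complex.exp (-(Complex.I * φ₁)), 0; 0, (d : ℂ)]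

/-- The Kraus operator `K₂ = (1/√2)[[0, b e^{iφ₂}],[c, 0]]`. -/
noncomputable def kraus2 (b c φ₂ : ℝ) : Matrix (Fin 2) (Fin 2) ℂ :=
  ((Real.sqrt 2 : ℂ))⁻¹ • !![0, (b : ℂ) * Complex.exp (Complex.I * φ₂); (c : ℂ), 0]

set_option maxHeartbeats 1000000 in
/-- If `a² + c² = 2` and `b² + d² = 2` then (i) `U` is unitary, and (ii) for
every `ρ ∈ M₂(ℂ)`, writing `U (|0⟩⟨0| ⊗ ρ) U†` in 2×2 block form, the sum of its diagonal
blocks (the partial trace over the environment) equals `K₁ ρ K₁† + K₂ ρ K₂†`. -/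
theorem stinespring_dilation_of_quasi_extreme (a b c d φ₁ φ₂ : ℝ)
    (hac : a ^ 2 + c ^ 2 = 2) (hbd : b ^ 2 + d ^ 2 = 2) :
    (stinespringU a b c d φ₁ φ₂ * (stinespringU a b c d φ₁ φ₂)ᴴ = 1 ∧
      (stinespringU a b c d φ₁ φ₂)ᴴ * stinespringU a b c d φ₁ φ₂ = 1) ∧
    ∀ ρ : Matrix (Fin 2) (Fin 2) ℂ,
      (stinespringU a b c d φ₁ φ₂ * Matrix.fromBlocks ρ 0 0 0 *
          (stinespringU a b c d φ₁ φ₂)ᴴ).toBlocks₁₁ +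
        (stinespringU a b c d φ₁ φ₂ * Matrix.fromBlocks ρ 0 0 0 *
          (stinespringU a b c d φ₁ φ₂)ᴴ).toBlocks₂₂ =
      kraus1 a d φ₁ * ρ * (kraus1 a d φ₁)ᴴ + kraus2 b c φ₂ * ρ * (kraus2 b c φ₂)ᴴ := by
  have hs : (Real.sqrt 2 : ℂ) * (Real.sqrt 2 : ℂ) = 2 := by
    norm_cast; exact Real.mul_self_sqrt (by norm_num)
  have hinv : ((Real.sqrt 2 : ℂ))⁻¹ * ((Real.sqrt 2 : ℂ))⁻¹ = (2:ℂ)⁻¹ := by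
    rw [← mul_inv, hs]
  have he1 : Complex.exp (Complex.I * φ₁) * Complex.exp (-(Complex.I * φ₁)) = 1 := by
    rw [← Complex.exp_add, add_neg_cancel, Complex.exp_zero]
  have he2 : Complex.exp (Complex.I * φ₂) * Complex.exp (-(Complex.I * φ₂)) = 1 := by
    rw [← Complex.exp_add, add_neg_cancel, Complex.exp_zero]
  have hac' : (a:ℂ)^2 + (c:ℂ)^2 = 2 := by exact_mod_cast hac
  have hbd' : (b:ℂ)^2 + (d:ℂ)^2 = 2 := by exact_mod_cast hbd
  constructor
  · constructor <;>
    · ext i j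
      rcases i with i | i <;> rcases j with j | j <;> fin_cases i <;> fin_cases j <;>
        simp [stinespringU, Matrix.mul_apply, Fin.sum_univ_two, Matrix.one_apply,
          Matrix.conjTranspose_apply, Complex.star_def, _root_.map_mul, map_neg,
          Complex.conj_ofReal, Complex.conj_I, ← Complex.exp_conj] <;>
        first
          | ring1
          | linear_combination (((Real.sqrt 2:ℂ))⁻¹^2 * ((a:ℂ)^2) * he1 + ((Real.sqrt 2:ℂ))⁻¹^2 * hac' + 2 * hinv)
          | linear_combination (((Real.sqrt 2:ℂ))⁻¹^2 * ((b:ℂ)^2) * he2 + ((Real.sqrt 2:ℂ))⁻¹^2 * hbd' + 2 * hinv)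
  · intro ρ
    have : stinespringU a b c d φ₁ φ₂ = Matrix.fromBlocks
        (kraus1 a d φ₁)
        (((Real.sqrt 2 : ℂ))⁻¹ • !![0, -(c : ℂ); -((b : ℂ) * Complex.exp (-(Complex.I * φ₂))), 0])
        (kraus2 b c φ₂)
        (((Real.sqrt 2 : ℂ))⁻¹ • !![(d : ℂ), 0; 0, (a : ℂ) * Complex.exp (Complex.I * φ₁)]) := by
      simp [stinespringU, kraus1, kraus2]
      ext i j
      rcases i with i | i <;> rcases j with j | j <;> fin_cases i <;> fin_cases j <;> simp [kraus1, kraus2]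
    rw [this]
    simp [Matrix.fromBlocks_conjTranspose, Matrix.fromBlocks_multiply,
      Matrix.toBlocks_fromBlocks₁₁, Matrix.toBlocks_fromBlocks₂₂]
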